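/- (Minkowski's inequality) Let f, g : ℝ → ℝ, α > 0, β > 0, p > 1, and a, b ∈ ℝ with a < b, b ∈ A := {a + kα : k ∈ ℕ₀} and a ∈ B := {b − kβ : k ∈ ℕ₀}. If |f| and |g| are α,β-symmetric integrable on [a,b], then |f+g|^p, |f|^p and |g|^p are α,β-symmetric integrable on [a,b] and (∫_a^b |f(t)+g(t)|^p d_{α,β}t)^{1/p} ≤ (∫_a^b |f(t)|^p d_{α,β}t)^{1/p} + (∫_a^b |g(t)|^p d_{α,β}t)^{1/p}. -/

import Mathlib

/-- The α-forward integral (Nörlund sum) of `f` from `a` to `b`: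
`∫_a^b f(t) Δ_α t = α·∑_{k=0}^∞ f(a+kα) − α·∑_{k=0}^∞ f(b+kα)`. -/
noncomputable def deltaInt (α : ℝ) (f : ℝ → ℝ) (a b : ℝ) : ℝ :=
  α * ∑' k : ℕ, f (a + k * α) - α * ∑' k : ℕ, f (b + k * α)

/-- `f` is α-forward integrable on `[a,b]`: both defining series converge. -/
def ForwardIntegrable (α : ℝ) (f : ℝ → ℝ) (a b : ℝ) : Prop :=
  Summable (fun k : ℕ => f (a + k * α)) ∧ Summable (fun k : ℕ => f (b + k * α))

/-- The β-backward integral of `f` from `a` to `b`: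
`∫_a^b f(t) ∇_β t = β·∑_{k=0}^∞ f(b−kβ) − β·∑_{k=0}^∞ f(a−kβ)`. -/
noncomputable def nablaInt (β : ℝ) (f : ℝ → ℝ) (a b : ℝ) : ℝ :=
  β * ∑' k : ℕ, f (b - k * β) - β * ∑' k : ℕ, f (a - k * β)

/-- `f` is β-backward integrable on `[a,b]`: both defining series converge. -/
def BackwardIntegrable (β : ℝ) (f : ℝ → ℝ) (a b : ℝ) : Prop :=
  Summable (fun k : ℕ => f (a - k * β)) ∧ Summable (fun k : ℕ => f (b - k * β))

/-- `f` is α,β-symmetric integrable on `[a,b]`. -/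
def SymIntegrable (α β : ℝ) (f : ℝ → ℝ) (a b : ℝ) : Prop :=
  ForwardIntegrable α f a b ∧ BackwardIntegrable β f a b

/-- The α,β-symmetric integral of `f` from `a` to `b`. -/
noncomputable def symInt (α β : ℝ) (f : ℝ → ℝ) (a b : ℝ) : ℝ :=
  (α / (α + β)) * deltaInt α f a b + (β / (α + β)) * nablaInt β f a b

/-! Since `b = a + nα` and `a = b - mβ`, the tails of the defining series cancel and the
symmetric integral is the finite sum `α²/(α+β) ∑_{k<n} h(a+kα) + β²/(α+β) ∑_{k<m} h(b-kβ)`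
with nonnegative weights. Absorbing the weights as `w^(1/p)` into the functions reduces the
claim to Minkowski's inequality for finite sums. The `p`-th powers stay summable because the
terms of a summable nonnegative series are eventually `≤ 1`, where `x ^ p ≤ x`. -/

open Finset

lemma Summable.rpow_of_one_le {ι : Type*} {u : ι → ℝ} {p : ℝ} (hu0 : ∀ i, 0 ≤ u i)
    (hu : Summable u) (hp : 1 ≤ p) : Summable fun i => u i ^ p := by
  refine hu.of_norm_bounded_eventually ?_
  filter_upwards [hu.tendsto_cofinite_zero.eventually (Iic_mem_nhds one_pos)] with i hi
  rw [Real.norm_of_nonneg (Real.rpow_nonneg (hu0 i) p)]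
  exact Real.rpow_le_self_of_le_one (hu0 i) hi hp

section SymIntegrable

variable {α β a b : ℝ} {h k : ℝ → ℝ}

lemma SymIntegrable.add (hh : SymIntegrable α β h a b) (hk : SymIntegrable α β k a b) :
    SymIntegrable α β (fun t => h t + k t) a b :=
  ⟨⟨hh.1.1.add hk.1.1, hh.1.2.add hk.1.2⟩, ⟨hh.2.1.add hk.2.1, hh.2.2.add hk.2.2⟩⟩

lemma SymIntegrable.rpow_of_one_le {p : ℝ} (h0 : ∀ t, 0 ≤ h t) (hh : SymIntegrable α β h a b)
    (hp : 1 ≤ p) : SymIntegrable α β (fun t => h t ^ p) a b :=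
  ⟨⟨hh.1.1.rpow_of_one_le (fun _ => h0 _) hp, hh.1.2.rpow_of_one_le (fun _ => h0 _) hp⟩,
    ⟨hh.2.1.rpow_of_one_le (fun _ => h0 _) hp, hh.2.2.rpow_of_one_le (fun _ => h0 _) hp⟩⟩

lemma SymIntegrable.of_nonneg_of_le (h0 : ∀ t, 0 ≤ h t) (hhk : ∀ t, h t ≤ k t)
    (hk : SymIntegrable α β k a b) : SymIntegrable α β h a b :=
  ⟨⟨hk.1.1.of_nonneg_of_le (fun _ => h0 _) (fun _ => hhk _),
      hk.1.2.of_nonneg_of_le (fun _ => h0 _) (fun _ => hhk _)⟩,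
    ⟨hk.2.1.of_nonneg_of_le (fun _ => h0 _) (fun _ => hhk _),
      hk.2.2.of_nonneg_of_le (fun _ => h0 _) (fun _ => hhk _)⟩⟩

end SymIntegrable

lemma deltaInt_eq_sum {α a b : ℝ} {h : ℝ → ℝ} {n : ℕ} (hb : b = a + n * α)
    (ha : Summable fun k : ℕ => h (a + k * α)) :
    deltaInt α h a b = α * ∑ k ∈ range n, h (a + k * α) := by
  have htail : (fun k : ℕ => h (b + k * α)) = fun k : ℕ => h (a + (k + n : ℕ) * α) := by
    funext k; rw [hb]; push_cast; ring_nf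
  rw [deltaInt, htail, ← ha.sum_add_tsum_nat_add n]
  ring

lemma nablaInt_eq_sum {β a b : ℝ} {h : ℝ → ℝ} {m : ℕ} (ha : a = b - m * β)
    (hb : Summable fun k : ℕ => h (b - k * β)) :
    nablaInt β h a b = β * ∑ k ∈ range m, h (b - k * β) := by
  have htail : (fun k : ℕ => h (a - k * β)) = fun k : ℕ => h (b - (k + m : ℕ) * β) := by
    funext k; rw [ha]; push_cast; ring_nf
  rw [nablaInt, htail, ← hb.sum_add_tsum_nat_add m]
  ring

/-- Quadrature weights of the symmetric integral: forward nodes `a + kα` (`inl k`) and backward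
nodes `b - kβ` (`inr k`). -/
noncomputable def symWeight (α β : ℝ) : ℕ ⊕ ℕ → ℝ :=
  Sum.elim (fun _ => α ^ 2 / (α + β)) (fun _ => β ^ 2 / (α + β))

def symNode (α β a b : ℝ) : ℕ ⊕ ℕ → ℝ :=
  Sum.elim (fun k => a + k * α) (fun k => b - k * β)

lemma symWeight_nonneg {α β : ℝ} (hα : 0 ≤ α) (hβ : 0 ≤ β) (i : ℕ ⊕ ℕ) :
    0 ≤ symWeight α β i := by
  cases i <;> simp only [symWeight, Sum.elim_inl, Sum.elim_inr] <;> positivity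

lemma symInt_eq_sum {α β a b : ℝ} {h : ℝ → ℝ} {n m : ℕ} (hb : b = a + n * α)
    (ha : a = b - m * β) (hh : SymIntegrable α β h a b) :
    symInt α β h a b =
      ∑ i ∈ (range n).disjSum (range m), symWeight α β i * h (symNode α β a b i) := by
  rw [symInt, deltaInt_eq_sum hb hh.1.1, nablaInt_eq_sum ha hh.2.2, sum_disjSum]
  simp only [symWeight, symNode, Sum.elim_inl, Sum.elim_inr, ← mul_sum]
  ring

lemma mul_abs_rpow_eq_abs_rpow_mul {w x p : ℝ} (hw : 0 ≤ w) (hp : p ≠ 0) :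
    w * |x| ^ p = |w ^ (1 / p) * x| ^ p := by
  rw [abs_mul, abs_of_nonneg (Real.rpow_nonneg hw _),
    Real.mul_rpow (Real.rpow_nonneg hw _) (abs_nonneg _), ← Real.rpow_mul hw,
    one_div_mul_cancel hp, Real.rpow_one]

theorem Lp_add_le_weighted {ι : Type*} (s : Finset ι) {w f g : ι → ℝ} (hw : ∀ i ∈ s, 0 ≤ w i)
    {p : ℝ} (hp : 1 ≤ p) :
    (∑ i ∈ s, w i * |f i + g i| ^ p) ^ (1 / p) ≤
      (∑ i ∈ s, w i * |f i| ^ p) ^ (1 / p) + (∑ i ∈ s, w i * |g i| ^ p) ^ (1 / p) := by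
  have hp0 : p ≠ 0 := by positivity
  have hc (u : ι → ℝ) : ∑ i ∈ s, w i * |u i| ^ p = ∑ i ∈ s, |w i ^ (1 / p) * u i| ^ p :=
    sum_congr rfl fun i hi => mul_abs_rpow_eq_abs_rpow_mul (hw i hi) hp0
  simpa only [hc, mul_add] using
    Real.Lp_add_le s (fun i => w i ^ (1 / p) * f i) (fun i => w i ^ (1 / p) * g i) hp

theorem sym_minkowski_inequality_general (f g : ℝ → ℝ) (α β p : ℝ) (hα : 0 < α) (hβ : 0 < β)
    (a b : ℝ) (hbA : ∃ k : ℕ, b = a + k * α) (haB : ∃ k : ℕ, a = b - k * β) (hp : 1 < p)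
    (hf : SymIntegrable α β (fun t => |f t|) a b)
    (hg : SymIntegrable α β (fun t => |g t|) a b) :
    SymIntegrable α β (fun t => |f t + g t| ^ p) a b ∧
    SymIntegrable α β (fun t => |f t| ^ p) a b ∧
    SymIntegrable α β (fun t => |g t| ^ p) a b ∧
    (symInt α β (fun t => |f t + g t| ^ p) a b) ^ (1 / p) ≤
      (symInt α β (fun t => |f t| ^ p) a b) ^ (1 / p) +
        (symInt α β (fun t => |g t| ^ p) a b) ^ (1 / p) := by
  obtain ⟨n, hn⟩ := hbA
  obtain ⟨m, hm⟩ := haB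
  have hFG : SymIntegrable α β (fun t => |f t + g t| ^ p) a b :=
    ((hf.add hg).rpow_of_one_le (fun t => by positivity) hp.le).of_nonneg_of_le
      (fun t => by positivity)
      (fun t => Real.rpow_le_rpow (abs_nonneg _) (abs_add_le _ _) (by linarith))
  have hF := hf.rpow_of_one_le (fun t => abs_nonneg (f t)) hp.le
  have hG := hg.rpow_of_one_le (fun t => abs_nonneg (g t)) hp.le
  refine ⟨hFG, hF, hG, ?_⟩
  rw [symInt_eq_sum hn hm hFG, symInt_eq_sum hn hm hF, symInt_eq_sum hn hm hG]
  exact Lp_add_le_weighted _ (fun i _ => symWeight_nonneg hα.le hβ.le i) hp.le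

theorem sym_minkowski_inequality (f g : ℝ → ℝ) (α β p : ℝ) (hα : 0 < α) (hβ : 0 < β)
    (a b : ℝ) (hab : a < b) (hbA : ∃ k : ℕ, b = a + k * α) (haB : ∃ k : ℕ, a = b - k * β) (hp : 1 < p)
    (hf : SymIntegrable α β (fun t => |f t|) a b)
    (hg : SymIntegrable α β (fun t => |g t|) a b) :
    SymIntegrable α β (fun t => |f t + g t| ^ p) a b ∧
    SymIntegrable α β (fun t => |f t| ^ p) a b ∧
    SymIntegrable α β (fun t => |g t| ^ p) a b ∧
    (symInt α β (fun t => |f t + g t| ^ p) a b) ^ (1 / p) ≤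
      (symInt α β (fun t => |f t| ^ p) a b) ^ (1 / p) +
        (symInt α β (fun t => |g t| ^ p) a b) ^ (1 / p) :=
  sym_minkowski_inequality_general f g α β p hα hβ a b hbA haB hp hf hg
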